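/- Site-by-site bound on the partial-trace localization error. Let A be any operator on ⨂_{i∈Λ} ℂ² and X̃ ⊆ Λ. Then for every p ∈ [1,∞], ‖A − (tr_{X̃^c}[A] / tr_{X̃^c}(1̂)) ⊗ 1_{X̃^c}‖_p ≤ Σ_{i∈X̃^c} sup_{U_i} ‖[A, U_i]‖_p, where the supremum runs over all unitaries U_i supported on the single site {i}. -/

import Mathlib

open scoped Classical ENNReal Matrix ComplexOrder
open Complex

noncomputable section

/-- Spin configurations of a lattice `Λ` of (1/2)-spins. -/
abbrev SpinConf (Λ : Type) := Λ → Fin 2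

/-- Operators on the Hilbert space `⨂_{i∈Λ} ℂ²`, realized as complex matrices
indexed by spin configurations. -/
abbrev SpinOp (Λ : Type) [Fintype Λ] [DecidableEq Λ] := Matrix (SpinConf Λ) (SpinConf Λ) ℂ

section GeneralMatrices

variable {n : Type} [Fintype n] [DecidableEq n]

/-- The operator norm `‖·‖` (largest singular value). -/
noncomputable def opNorm (A : Matrix n n ℂ) : ℝ :=
  ‖Matrix.toEuclideanCLM (𝕜 := ℂ) A‖

/-- The normalized Frobenius norm `‖O‖_F := √(tr(O†O)/tr(1̂))`. -/
noncomputable def frobNorm (A : Matrix n n ℂ) : ℝ :=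
  Real.sqrt ((Aᴴ * A).trace.re / (Fintype.card n))

/-- The Schatten `p`-norm; for `p = ∞` it is the operator norm, otherwise it is the
`ℓ^p` norm of the singular values. -/
noncomputable def schattenNorm (p : ℝ≥0∞) (A : Matrix n n ℂ) : ℝ :=
  if p = ⊤ then opNorm A
  else (∑ i, Real.sqrt ((Matrix.posSemidef_conjTranspose_mul_self A).1.eigenvalues i)
      ^ p.toReal) ^ (1 / p.toReal)

/-- The commutator `[A,B] := AB - BA`. -/
def commM (A B : Matrix n n ℂ) : Matrix n n ℂ := A * B - B * A

/-- `U` is a unitary matrix. -/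
def IsUnitaryM (U : Matrix n n ℂ) : Prop := Uᴴ * U = 1 ∧ U * Uᴴ = 1

/-- Heisenberg time evolution `O(t) := e^{iHt} O e^{-iHt}`. -/
noncomputable def timeEv (H : Matrix n n ℂ) (t : ℝ) (A : Matrix n n ℂ) : Matrix n n ℂ :=
  NormedSpace.exp ((Complex.I * (t : ℂ)) • H) * A *
    NormedSpace.exp ((-(Complex.I * (t : ℂ))) • H)

end GeneralMatrices

variable {Λ : Type} [Fintype Λ] [DecidableEq Λ]

/-- `A = A_X ⊗ 1_{X^c}`: the matrix entries vanish unless the configurations agree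
outside `X`, and depend only on the configurations inside `X`. -/
def IsSupportedOn (A : SpinOp Λ) (X : Finset Λ) : Prop :=
  (∀ a b : SpinConf Λ, (∃ i ∉ X, a i ≠ b i) → A a b = 0) ∧
  (∀ a b a' b' : SpinConf Λ, (∀ i ∈ X, a i = a' i) → (∀ i ∈ X, b i = b' i) →
    (∀ i ∉ X, a i = b i) → (∀ i ∉ X, a' i = b' i) → A a b = A a' b')

/-- The localization `(tr_{X^c}[A]/tr_{X^c}(1̂)) ⊗ 1_{X^c}` of an operator `A`
onto the subset `X` (normalized partial trace over `X^c` tensored with identity). -/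
noncomputable def localize (A : SpinOp Λ) (X : Finset Λ) : SpinOp Λ := fun a b =>
  (if ∀ i ∉ X, a i = b i then (1 : ℂ) else 0) *
    (∑ c : SpinConf Λ,
      A (fun i => if i ∈ X then a i else c i) (fun i => if i ∈ X then b i else c i))
    / (2 ^ Fintype.card Λ)

/-- `d` is a metric taking nonnegative integer values. -/
def IsLatticeMetric (d : Λ → Λ → ℕ) : Prop :=
  (∀ i j, d i j = d j i) ∧ (∀ i j, d i j = 0 ↔ i = j) ∧
    (∀ i j l, d i l ≤ d i j + d j l)

/-- The ball `i[r] := {j : d(i,j) ≤ r}`. -/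
def ball (d : Λ → Λ → ℕ) (i : Λ) (r : ℕ) : Finset Λ :=
  Finset.univ.filter (fun j => d i j ≤ r)

/-- The extended set `X[r] := ⋃_{i∈X} i[r]`. -/
def extend (d : Λ → Λ → ℕ) (X : Finset Λ) (r : ℕ) : Finset Λ :=
  Finset.univ.filter (fun j => ∃ i ∈ X, d i j ≤ r)

/-- The distance from a site to a (nonempty) finite set of sites. -/
noncomputable def distSet (d : Λ → Λ → ℕ) (i : Λ) (S : Finset Λ) : ℕ :=
  sInf {m : ℕ | ∃ j ∈ S, d i j = m}

/-- The inner boundary `∂X := {i ∈ X : d(i,X^c) = 1}`. -/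
noncomputable def bdry (d : Λ → Λ → ℕ) (X : Finset Λ) : Finset Λ :=
  X.filter (fun i => distSet d i Xᶜ = 1)

/-- The layer `(∂X)_s`: the sites of `X` at distance `-s` from `∂X` when `s ≤ 0`,
and the sites of `X^c` at distance `s` from `∂X` when `s > 0`. -/
noncomputable def layer (d : Λ → Λ → ℕ) (X : Finset Λ) (s : ℤ) : Finset Λ :=
  if s ≤ 0 then X.filter (fun i => (distSet d i (bdry d X) : ℤ) = -s)
  else Xᶜ.filter (fun i => (distSet d i (bdry d X) : ℤ) = s)

/-- The four single-site Pauli matrices `σ⁰ = 1, σˣ, σʸ, σᶻ`. -/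
def pauli : Fin 4 → Matrix (Fin 2) (Fin 2) ℂ :=
  ![1, !![0, 1; 1, 0], !![0, -Complex.I; Complex.I, 0], !![1, 0; 0, -1]]

/-- A Pauli string `⨂_{i∈Λ} σ^{p(i)}`. -/
noncomputable def pauliString (p : Λ → Fin 4) : SpinOp Λ :=
  fun a b => ∏ i, pauli (p i) (a i) (b i)

/-- The Pauli expansion coefficient `tr(P_p A)/2^{|Λ|}` of `A` at the string `p`. -/
noncomputable def pauliCoeff (A : SpinOp Λ) (p : Λ → Fin 4) : ℂ :=
  (pauliString p * A).trace / (2 ^ Fintype.card Λ)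

/-- `J := 3^{k/2} J₀`. -/
noncomputable def Jconst (k : ℕ) (J₀ : ℝ) : ℝ := Real.sqrt 3 ^ k * J₀

/-- `g̃ := max(gk, λJ)` with `J = 3^{k/2} J₀`. -/
noncomputable def gTilde (k : ℕ) (J₀ g lam : ℝ) : ℝ := max (g * k) (lam * Jconst k J₀)

/-- `C₀ := 2^{α-D/2+2} J₀ γ/(2α-D-1) + (80 g̃ γ 2^{α-D/2}/(α-D)) √(2α-2D+γ)`. -/
noncomputable def C0 (α J₀ γ : ℝ) (D : ℕ) (gt : ℝ) : ℝ :=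
  (2 : ℝ) ^ (α - (D : ℝ) / 2 + 2) * J₀ * γ / (2 * α - (D : ℝ) - 1) +
    (80 * gt * γ * (2 : ℝ) ^ (α - (D : ℝ) / 2) / (α - (D : ℝ))) *
      Real.sqrt (2 * α - 2 * (D : ℝ) + γ)

end

/-!
Tracing out the sites of `X̃ᶜ` one at a time telescopes the error into single-site steps.
At a site `i` the normalized partial trace is the Pauli twirl `B ↦ ¼ ∑ₖ σᵢᵏ B σᵢᵏ`, so
`B - twirl B = ¼ ∑ₖ [B, σᵢᵏ] σᵢᵏ` and `‖B - twirl B‖_p ≤ maxₖ ‖[B, σᵢᵏ]‖_p`. When `B` is `A` with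
some other sites already traced out, the twirls at those sites commute with `[·, σᵢᵏ]` and
are `‖·‖_p`-contractions (averages of unitary conjugations), hence `‖[B, σᵢᵏ]‖_p ≤ ‖[A, σᵢᵏ]‖_p`.

The two Schatten-norm facts this uses, the triangle inequality and unitary invariance, follow
from the duality `‖M‖_p = max |tr (M N)|` over the unit ball of the dual Schatten norm. Its
proof writes `M` and `N` in singular value form: `tr (M N) = ∑ᵢⱼ dᵢ eⱼ Gᵢⱼ Hⱼᵢ` with `G, H`
unitary, and `|Gᵢⱼ| |Hⱼᵢ|` is doubly substochastic, so Hölder's inequality applies.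
-/

open Matrix
open scoped Matrix.Norms.L2Operator

noncomputable section

lemma Real.sum_mul_mul_le_weighted_Lp_mul_Lq {ι : Type*} (s : Finset ι) {r q : ℝ}
    (hrq : r.HolderConjugate q) {w f g : ι → ℝ} (hw : ∀ i, 0 ≤ w i) (hf : ∀ i, 0 ≤ f i)
    (hg : ∀ i, 0 ≤ g i) :
    ∑ i ∈ s, w i * f i * g i ≤
      (∑ i ∈ s, w i * f i ^ r) ^ (1 / r) * (∑ i ∈ s, w i * g i ^ q) ^ (1 / q) := by
  have hpow : ∀ {t : ℝ} {h : ι → ℝ}, 0 < t → (∀ i, 0 ≤ h i) → ∀ i,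
      (w i ^ (1 / t) * h i) ^ t = w i * h i ^ t := fun ht hh i => by
    rw [Real.mul_rpow (Real.rpow_nonneg (hw i) _) (hh i), ← Real.rpow_mul (hw i),
      one_div_mul_cancel ht.ne', Real.rpow_one]
  have hsplit : ∀ i, w i * f i * g i = (w i ^ (1 / r) * f i) * (w i ^ (1 / q) * g i) := fun i => by
    rw [mul_mul_mul_comm, ← Real.rpow_add' (hw i) (by rw [hrq.one_div_add_one_div]; norm_num),
      hrq.one_div_add_one_div, div_one, Real.rpow_one, mul_assoc]
  simp only [hsplit, ← hpow hrq.pos hf, ← hpow hrq.symm.pos hg]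
  exact Real.inner_le_Lp_mul_Lq_of_nonneg s hrq
    (fun i _ => mul_nonneg (Real.rpow_nonneg (hw i) _) (hf i))
    (fun i _ => mul_nonneg (Real.rpow_nonneg (hw i) _) (hg i))

section Substochastic

variable {n : Type*} [Fintype n]

def IsDoublySubstochastic (m : n → n → ℝ) : Prop :=
  (∀ i j, 0 ≤ m i j) ∧ (∀ i, ∑ j, m i j ≤ 1) ∧ ∀ j, ∑ i, m i j ≤ 1

namespace IsDoublySubstochastic

variable {m : n → n → ℝ} {d e : n → ℝ}

lemma sum_mul_mul_le_sum (hm : IsDoublySubstochastic m) (hd : ∀ i, 0 ≤ d i)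
    (he : ∀ j, e j ≤ 1) :
    ∑ i, ∑ j, d i * e j * m i j ≤ ∑ i, d i := by
  refine Finset.sum_le_sum fun i _ => ?_
  calc ∑ j, d i * e j * m i j ≤ ∑ j, d i * m i j :=
        Finset.sum_le_sum fun j _ => by nlinarith [mul_nonneg (hd i) (hm.1 i j), he j]
    _ = d i * ∑ j, m i j := (Finset.mul_sum _ _ _).symm
    _ ≤ d i := mul_le_of_le_one_right (hd i) (hm.2.1 i)

lemma sum_mul_mul_le_of_holderConjugate {r q : ℝ} (hrq : r.HolderConjugate q)
    (hm : IsDoublySubstochastic m) (hd : ∀ i, 0 ≤ d i) (he0 : ∀ j, 0 ≤ e j)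
    (he : ∑ j, e j ^ q ≤ 1) :
    ∑ i, ∑ j, d i * e j * m i j ≤ (∑ i, d i ^ r) ^ (1 / r) := by
  obtain ⟨hm0, hrow, hcol⟩ := hm
  have hD : ∑ ij : n × n, m ij.1 ij.2 * d ij.1 ^ r ≤ ∑ i, d i ^ r := by
    simp only [Fintype.sum_prod_type, ← Finset.sum_mul]
    exact Finset.sum_le_sum fun i _ => mul_le_of_le_one_left (Real.rpow_nonneg (hd i) _) (hrow i)
  have hE : ∑ ij : n × n, m ij.1 ij.2 * e ij.2 ^ q ≤ 1 := by
    rw [Fintype.sum_prod_type, Finset.sum_comm]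
    simp only [← Finset.sum_mul]
    exact (Finset.sum_le_sum fun j _ =>
      mul_le_of_le_one_left (Real.rpow_nonneg (he0 j) _) (hcol j)).trans he
  have hD0 : 0 ≤ ∑ ij : n × n, m ij.1 ij.2 * d ij.1 ^ r :=
    Finset.sum_nonneg fun ij _ => mul_nonneg (hm0 _ _) (Real.rpow_nonneg (hd _) _)
  have hE0 : 0 ≤ ∑ ij : n × n, m ij.1 ij.2 * e ij.2 ^ q :=
    Finset.sum_nonneg fun ij _ => mul_nonneg (hm0 _ _) (Real.rpow_nonneg (he0 _) _)
  calc ∑ i, ∑ j, d i * e j * m i j = ∑ ij : n × n, m ij.1 ij.2 * d ij.1 * e ij.2 := by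
        rw [Fintype.sum_prod_type]
        simp only [mul_comm, mul_left_comm]
    _ ≤ (∑ ij : n × n, m ij.1 ij.2 * d ij.1 ^ r) ^ (1 / r) *
          (∑ ij : n × n, m ij.1 ij.2 * e ij.2 ^ q) ^ (1 / q) :=
        Real.sum_mul_mul_le_weighted_Lp_mul_Lq _ hrq (fun _ => hm0 _ _) (fun _ => hd _)
          fun _ => he0 _
    _ ≤ (∑ i, d i ^ r) ^ (1 / r) * 1 :=
        mul_le_mul (Real.rpow_le_rpow hD0 hD (by simpa using hrq.pos.le))
          (Real.rpow_le_one hE0 hE (by simpa using hrq.symm.pos.le)) (Real.rpow_nonneg hE0 _)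
          (Real.rpow_nonneg (hD0.trans hD) _)
    _ = _ := mul_one _

end IsDoublySubstochastic

end Substochastic

lemma Finset.sum_mul_le_one_of_sum_sq_eq_one {ι : Type*} (s : Finset ι) {f g : ι → ℝ}
    (hf : ∀ i, 0 ≤ f i) (hg : ∀ i, 0 ≤ g i) (hf1 : ∑ i ∈ s, f i ^ 2 = 1)
    (hg1 : ∑ i ∈ s, g i ^ 2 = 1) : ∑ i ∈ s, f i * g i ≤ 1 := by
  have h := Finset.sum_mul_sq_le_sq_mul_sq s f g
  rw [hf1, hg1, one_mul] at h
  exact (sq_le_one_iff₀ (Finset.sum_nonneg fun i _ => mul_nonneg (hf i) (hg i))).mp h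

section UnitaryEntries

variable {𝕜 n : Type*} [RCLike 𝕜] [Fintype n] [DecidableEq n]

lemma sum_norm_sq_row_of_mem_unitary {U : Matrix n n 𝕜} (hU : U ∈ unitary (Matrix n n 𝕜))
    (i : n) : ∑ j, ‖U i j‖ ^ 2 = 1 := by
  have h : (U * star U) i i = (1 : Matrix n n 𝕜) i i := by rw [Unitary.mul_star_self_of_mem hU]
  simp only [mul_apply, star_apply, one_apply_eq, RCLike.star_def, RCLike.mul_conj] at h
  exact_mod_cast (congrArg RCLike.re h).trans RCLike.one_re

lemma sum_norm_sq_col_of_mem_unitary {U : Matrix n n 𝕜} (hU : U ∈ unitary (Matrix n n 𝕜))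
    (j : n) : ∑ i, ‖U i j‖ ^ 2 = 1 := by
  simpa [star_apply] using sum_norm_sq_row_of_mem_unitary (Unitary.star_mem hU) j

lemma isDoublySubstochastic_norm_mul_norm {G H : Matrix n n 𝕜} (hG : G ∈ unitary (Matrix n n 𝕜))
    (hH : H ∈ unitary (Matrix n n 𝕜)) : IsDoublySubstochastic fun i j => ‖G i j‖ * ‖H j i‖ :=
  ⟨fun i j => by positivity,
    fun i => Finset.sum_mul_le_one_of_sum_sq_eq_one _ (fun _ => norm_nonneg _)
      (fun _ => norm_nonneg _) (sum_norm_sq_row_of_mem_unitary hG i)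
      (sum_norm_sq_col_of_mem_unitary hH i),
    fun j => Finset.sum_mul_le_one_of_sum_sq_eq_one _ (fun _ => norm_nonneg _)
      (fun _ => norm_nonneg _) (sum_norm_sq_col_of_mem_unitary hG j)
      (sum_norm_sq_row_of_mem_unitary hH j)⟩

end UnitaryEntries

section SingularValueDecomposition

variable {n : Type*} [Fintype n] [DecidableEq n]

def singularValues (M : Matrix n n ℂ) (i : n) : ℝ :=
  √((posSemidef_conjTranspose_mul_self M).1.eigenvalues i)

def rightSingularBasis (M : Matrix n n ℂ) : OrthonormalBasis n ℂ (EuclideanSpace ℂ n) :=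
  (posSemidef_conjTranspose_mul_self M).1.eigenvectorBasis

lemma singularValues_nonneg (M : Matrix n n ℂ) (i : n) : 0 ≤ singularValues M i :=
  Real.sqrt_nonneg _

lemma star_mulVec_rightSingularBasis_dotProduct (M : Matrix n n ℂ) (i j : n) :
    star (M *ᵥ ⇑(rightSingularBasis M i)) ⬝ᵥ (M *ᵥ ⇑(rightSingularBasis M j)) =
      if i = j then ((singularValues M j ^ 2 : ℝ) : ℂ) else 0 := by
  have hv := (orthonormal_iff_ite (𝕜 := ℂ)).mp (rightSingularBasis M).orthonormal i j
  rw [EuclideanSpace.inner_eq_star_dotProduct, dotProduct_comm] at hv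
  rw [star_mulVec, ← dotProduct_mulVec, mulVec_mulVec, rightSingularBasis,
    (posSemidef_conjTranspose_mul_self M).1.mulVec_eigenvectorBasis j, dotProduct_smul,
    ← rightSingularBasis, hv, singularValues,
    Real.sq_sqrt ((posSemidef_conjTranspose_mul_self M).eigenvalues_nonneg j)]
  split_ifs <;> simp [Complex.real_smul]

lemma mulVec_rightSingularBasis_eq_zero {M : Matrix n n ℂ} {j : n} (hj : singularValues M j = 0) :
    M *ᵥ ⇑(rightSingularBasis M j) = 0 := by
  rw [← dotProduct_star_self_eq_zero, star_mulVec_rightSingularBasis_dotProduct, if_pos rfl, hj]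
  simp

lemma orthonormal_inv_singularValues_smul_mulVec (M : Matrix n n ℂ) :
    Orthonormal ℂ ({j | singularValues M j ≠ 0}.domRestrict fun j =>
      (singularValues M j : ℂ)⁻¹ • WithLp.toLp 2 (M *ᵥ ⇑(rightSingularBasis M j))) := by
  rw [orthonormal_iff_ite]
  rintro ⟨i, hi⟩ ⟨j, -⟩
  have hi' : (singularValues M i : ℂ) ≠ 0 := by exact_mod_cast hi
  simp only [Set.domRestrict_apply, inner_smul_left, inner_smul_right,
    EuclideanSpace.inner_eq_star_dotProduct, dotProduct_comm _ (star _),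
    star_mulVec_rightSingularBasis_dotProduct, Subtype.mk.injEq]
  split_ifs with h
  · subst h
    simp only [map_inv₀, conj_ofReal, ofReal_pow]
    field_simp
  · simp

lemma OrthonormalBasis.exists_mem_unitary_apply_eq (b : OrthonormalBasis n ℂ (EuclideanSpace ℂ n)) :
    ∃ U ∈ unitary (Matrix n n ℂ), ∀ i j, U i j = b j i :=
  ⟨_, (EuclideanSpace.basisFun n ℂ).toMatrix_orthonormalBasis_mem_unitary b, fun i j => by
    simp [Module.Basis.toMatrix_apply]⟩

theorem exists_unitary_mul_diagonal_singularValues_mul_star (M : Matrix n n ℂ) :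
    ∃ U ∈ unitary (Matrix n n ℂ), ∃ V ∈ unitary (Matrix n n ℂ),
      M = U * diagonal (fun i => (singularValues M i : ℂ)) * star V := by
  obtain ⟨b, hb⟩ :=
    (orthonormal_inv_singularValues_smul_mulVec M).exists_orthonormalBasis_extension_of_card_eq
      (finrank_euclideanSpace (𝕜 := ℂ) (ι := n))
  obtain ⟨U, hU, hUb⟩ := b.exists_mem_unitary_apply_eq
  obtain ⟨V, hV, hVv⟩ := (rightSingularBasis M).exists_mem_unitary_apply_eq
  refine ⟨U, hU, V, hV, ?_⟩
  have hMV : M * V = U * diagonal (fun i => (singularValues M i : ℂ)) := by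
    ext x j
    have hMVj : (M * V) x j = (M *ᵥ ⇑(rightSingularBasis M j)) x := by
      simp [hVv, mul_apply, mulVec, dotProduct]
    rw [mul_diagonal, hMVj, hUb]
    by_cases hj : singularValues M j = 0
    · simp [mulVec_rightSingularBasis_eq_zero hj, hj]
    · have hj' : (singularValues M j : ℂ) ≠ 0 := by exact_mod_cast hj
      simp only [hb j hj, PiLp.smul_apply, smul_eq_mul]
      field_simp
  rw [← hMV, mul_assoc, Unitary.mul_star_self_of_mem hV, mul_one]

end SingularValueDecomposition

section SchattenDuality

variable {n : Type*} [Fintype n] [DecidableEq n]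

/-- The unit ball of the Schatten norm dual to `‖·‖_r`, in singular value form. -/
def InSchattenDualBall (r : ℝ) (N : Matrix n n ℂ) : Prop :=
  ∃ U ∈ unitary (Matrix n n ℂ), ∃ V ∈ unitary (Matrix n n ℂ), ∃ e : n → ℝ, (∀ j, 0 ≤ e j) ∧
    (r = 1 → ∀ j, e j ≤ 1) ∧ (1 < r → ∑ j, e j ^ r.conjExponent ≤ 1) ∧
    N = U * diagonal (fun j => (e j : ℂ)) * star V

lemma inSchattenDualBall_zero (r : ℝ) : InSchattenDualBall r (0 : Matrix n n ℂ) := by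
  refine ⟨1, one_mem _, 1, one_mem _, 0, fun _ => le_rfl, fun _ _ => zero_le_one, fun hr1 => ?_,
    by simp⟩
  simp [Real.zero_rpow (Real.HolderConjugate.conjExponent hr1).symm.pos.ne']

lemma InSchattenDualBall.unitary_mul_mul {r : ℝ} {N W₁ W₂ : Matrix n n ℂ}
    (hN : InSchattenDualBall r N) (h₁ : W₁ ∈ unitary (Matrix n n ℂ))
    (h₂ : W₂ ∈ unitary (Matrix n n ℂ)) : InSchattenDualBall r (W₁ * N * W₂) := by
  obtain ⟨U, hU, V, hV, e, he0, he1, heq, rfl⟩ := hN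
  refine ⟨W₁ * U, mul_mem h₁ hU, star W₂ * V, mul_mem (Unitary.star_mem h₂) hV,
    e, he0, he1, heq, ?_⟩
  simp only [star_mul, star_star, mul_assoc]

lemma trace_diagonal_mul_mul_diagonal_mul (d e : n → ℂ) (G H : Matrix n n ℂ) :
    (diagonal d * G * diagonal e * H).trace = ∑ i, ∑ j, d i * G i j * e j * H j i := by
  have hdGe : diagonal d * G * diagonal e = of fun i j => d i * G i j * e j := by
    ext i j
    rw [mul_diagonal, diagonal_mul, of_apply]
  simp only [hdGe, trace, diag_apply, mul_apply, of_apply]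

theorem norm_trace_mul_le_of_inSchattenDualBall {r : ℝ} (hr : 1 ≤ r) (M : Matrix n n ℂ)
    {N : Matrix n n ℂ} (hN : InSchattenDualBall r N) :
    ‖(M * N).trace‖ ≤ (∑ i, singularValues M i ^ r) ^ (1 / r) := by
  obtain ⟨U₂, hU₂, V₂, hV₂, e, he0, he1, heq, rfl⟩ := hN
  obtain ⟨U₁, hU₁, V₁, hV₁, hM⟩ := exists_unitary_mul_diagonal_singularValues_mul_star M
  set d := singularValues M
  have hd : ∀ i, 0 ≤ d i := singularValues_nonneg M
  set G := star V₁ * U₂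
  set H := star V₂ * U₁
  have hm := isDoublySubstochastic_norm_mul_norm (mul_mem (Unitary.star_mem hV₁) hU₂)
    (mul_mem (Unitary.star_mem hV₂) hU₁)
  have htr : (M * (U₂ * diagonal (fun j => (e j : ℂ)) * star V₂)).trace
      = (diagonal (fun i => (d i : ℂ)) * G * diagonal (fun j => (e j : ℂ)) * H).trace := by
    simp only [hM, G, H, mul_assoc]
    rw [trace_mul_comm U₁]
    simp only [mul_assoc]
  calc ‖(M * (U₂ * diagonal (fun j => (e j : ℂ)) * star V₂)).trace‖
      ≤ ∑ i, ∑ j, d i * e j * (‖G i j‖ * ‖H j i‖) := by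
        rw [htr, trace_diagonal_mul_mul_diagonal_mul]
        refine (norm_sum_le _ _).trans (Finset.sum_le_sum fun i _ =>
          (norm_sum_le _ _).trans (Finset.sum_le_sum fun j _ => le_of_eq ?_))
        simp only [norm_mul, Complex.norm_of_nonneg (hd i), Complex.norm_of_nonneg (he0 j)]
        ring
    _ ≤ (∑ i, d i ^ r) ^ (1 / r) := by
        rcases hr.eq_or_lt with rfl | hr1
        · simpa using hm.sum_mul_mul_le_sum hd (he1 rfl)
        · exact hm.sum_mul_mul_le_of_holderConjugate (Real.HolderConjugate.conjExponent hr1) hd he0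
            (heq hr1)

lemma trace_mul_diagonal_mul_star_mul {U V : Matrix n n ℂ} (hU : U ∈ unitary (Matrix n n ℂ))
    (hV : V ∈ unitary (Matrix n n ℂ)) (d e : n → ℂ) :
    (U * diagonal d * star V * (V * diagonal e * star U)).trace = ∑ i, d i * e i := by
  simp only [mul_assoc]
  rw [← mul_assoc (star V) V, Unitary.star_mul_self_of_mem hV, one_mul, trace_mul_comm U]
  simp only [mul_assoc]
  rw [Unitary.star_mul_self_of_mem hU, mul_one, diagonal_mul_diagonal, trace_diagonal]

theorem exists_inSchattenDualBall_trace_mul_eq {r : ℝ} (hr : 1 ≤ r) (M : Matrix n n ℂ) :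
    ∃ N, InSchattenDualBall r N ∧
      (M * N).trace = (((∑ i, singularValues M i ^ r) ^ (1 / r) : ℝ) : ℂ) := by
  set d := singularValues M
  have hd : ∀ i, 0 ≤ d i := singularValues_nonneg M
  have hr0 : r ≠ 0 := by positivity
  have hS : 0 ≤ ∑ i, d i ^ r := Finset.sum_nonneg fun i _ => Real.rpow_nonneg (hd i) r
  set c := (∑ i, d i ^ r) ^ (1 / r)
  rcases (Real.rpow_nonneg hS (1 / r) : 0 ≤ c).eq_or_lt with hc | hc
  · exact ⟨0, inSchattenDualBall_zero r, by simp [c, ← hc]⟩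
  have hcr : c ^ r = ∑ i, d i ^ r := by
    rw [← Real.rpow_mul hS, one_div_mul_cancel hr0, Real.rpow_one]
  obtain ⟨U, hU, V, hV, hM⟩ := exists_unitary_mul_diagonal_singularValues_mul_star M
  -- the equality case of Hölder's inequality: `e ∝ d ^ (r - 1)`
  let e : n → ℝ := fun i => (d i / c) ^ (r - 1)
  have he0 : ∀ i, 0 ≤ e i := fun i => Real.rpow_nonneg (div_nonneg (hd i) hc.le) _
  have hde : ∀ i, d i * e i = d i ^ r / c ^ (r - 1) := by
    intro i
    rw [show e i = (d i / c) ^ (r - 1) from rfl, Real.div_rpow (hd i) hc.le, mul_div_assoc',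
      ← Real.rpow_one_add' (hd i) (by simpa), add_sub_cancel]
  refine ⟨V * diagonal (fun j => (e j : ℂ)) * star U, ⟨V, hV, U, hU, e, he0, ?_, ?_, rfl⟩, ?_⟩
  · rintro rfl j
    simp [e]
  · intro hr1
    have he : ∀ j, e j ^ r.conjExponent = d j ^ r / c ^ r := by
      intro j
      rw [← Real.rpow_mul (div_nonneg (hd j) hc.le), Real.conjExponent,
        mul_div_cancel₀ _ (sub_ne_zero.mpr hr1.ne'), Real.div_rpow (hd j) hc.le]
    rw [Finset.sum_congr rfl fun j _ => he j, ← Finset.sum_div, hcr, div_self]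
    exact hcr ▸ (Real.rpow_pos_of_pos hc r).ne'
  · rw [hM, trace_mul_diagonal_mul_star_mul hU hV]
    norm_cast
    rw [Finset.sum_congr rfl fun i _ => hde i, ← Finset.sum_div, ← hcr, ← Real.rpow_sub hc,
      sub_sub_cancel, Real.rpow_one]

end SchattenDuality

lemma IsUnitaryM.mem_unitary {n : Type} [Fintype n] [DecidableEq n] {U : Matrix n n ℂ}
    (hU : IsUnitaryM U) : U ∈ unitary (Matrix n n ℂ) :=
  Unitary.mem_iff.mpr hU

section SchattenNorm

variable {n : Type} [Fintype n] [DecidableEq n] {p : ℝ≥0∞}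

lemma schattenNorm_top (M : Matrix n n ℂ) : schattenNorm ⊤ M = ‖M‖ := if_pos rfl

lemma schattenNorm_of_ne_top (hp : p ≠ ⊤) (M : Matrix n n ℂ) :
    schattenNorm p M = (∑ i, singularValues M i ^ p.toReal) ^ (1 / p.toReal) := if_neg hp

lemma one_le_toReal_of_ne_top (hp : 1 ≤ p) (hpt : p ≠ ⊤) : 1 ≤ p.toReal := by
  simpa using ENNReal.toReal_mono hpt hp

lemma norm_trace_mul_le_schattenNorm (hp : 1 ≤ p) (hpt : p ≠ ⊤) (M : Matrix n n ℂ)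
    {N : Matrix n n ℂ} (hN : InSchattenDualBall p.toReal N) :
    ‖(M * N).trace‖ ≤ schattenNorm p M := by
  rw [schattenNorm_of_ne_top hpt]
  exact norm_trace_mul_le_of_inSchattenDualBall (one_le_toReal_of_ne_top hp hpt) M hN

lemma exists_norm_trace_mul_eq_schattenNorm (hp : 1 ≤ p) (hpt : p ≠ ⊤) (M : Matrix n n ℂ) :
    ∃ N, InSchattenDualBall p.toReal N ∧ ‖(M * N).trace‖ = schattenNorm p M := by
  obtain ⟨N, hN, htr⟩ :=
    exists_inSchattenDualBall_trace_mul_eq (one_le_toReal_of_ne_top hp hpt) M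
  refine ⟨N, hN, ?_⟩
  rw [htr, schattenNorm_of_ne_top hpt, Complex.norm_real, Real.norm_of_nonneg]
  exact Real.rpow_nonneg (Finset.sum_nonneg fun i _ =>
    Real.rpow_nonneg (singularValues_nonneg M i) _) _

theorem schattenNorm_sum_smul_le (hp : 1 ≤ p) {ι : Type*} (s : Finset ι) (c : ι → ℂ)
    (M : ι → Matrix n n ℂ) :
    schattenNorm p (∑ k ∈ s, c k • M k) ≤ ∑ k ∈ s, ‖c k‖ * schattenNorm p (M k) := by
  by_cases hpt : p = ⊤
  · subst hpt
    simp only [schattenNorm_top]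
    exact (norm_sum_le _ _).trans (Finset.sum_le_sum fun k _ => (norm_smul (c k) (M k)).le)
  obtain ⟨N, hN, htr⟩ := exists_norm_trace_mul_eq_schattenNorm hp hpt (∑ k ∈ s, c k • M k)
  rw [← htr, Finset.sum_mul, trace_sum]
  refine (norm_sum_le _ _).trans (Finset.sum_le_sum fun k _ => ?_)
  rw [smul_mul, trace_smul, norm_smul]
  exact mul_le_mul_of_nonneg_left (norm_trace_mul_le_schattenNorm hp hpt (M k) hN) (norm_nonneg _)

lemma schattenNorm_add_le (hp : 1 ≤ p) (M N : Matrix n n ℂ) :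
    schattenNorm p (M + N) ≤ schattenNorm p M + schattenNorm p N := by
  simpa [Fin.sum_univ_two] using schattenNorm_sum_smul_le hp Finset.univ 1 ![M, N]

lemma schattenNorm_sub_le (hp : 1 ≤ p) (M N : Matrix n n ℂ) :
    schattenNorm p (M - N) ≤ schattenNorm p M + schattenNorm p N := by
  simpa [Fin.sum_univ_two, sub_eq_add_neg] using
    schattenNorm_sum_smul_le hp Finset.univ ![1, -1] ![M, N]

lemma schattenNorm_zero_le (hp : 1 ≤ p) : schattenNorm p (0 : Matrix n n ℂ) ≤ 0 := by
  simpa using schattenNorm_sum_smul_le hp (∅ : Finset ℕ) 0 0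

theorem schattenNorm_unitary_mul_mul_le (hp : 1 ≤ p) {W₁ W₂ : Matrix n n ℂ}
    (h₁ : W₁ ∈ unitary (Matrix n n ℂ)) (h₂ : W₂ ∈ unitary (Matrix n n ℂ)) (M : Matrix n n ℂ) :
    schattenNorm p (W₁ * M * W₂) ≤ schattenNorm p M := by
  by_cases hpt : p = ⊤
  · subst hpt
    rw [schattenNorm_top, schattenNorm_top, CStarRing.norm_mul_mem_unitary _ h₂,
      CStarRing.norm_mem_unitary_mul _ h₁]
  obtain ⟨N, hN, htr⟩ := exists_norm_trace_mul_eq_schattenNorm hp hpt (W₁ * M * W₂)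
  have hcyc : (W₁ * M * W₂ * N).trace = (M * (W₂ * N * W₁)).trace := by
    rw [mul_assoc W₁, mul_assoc W₁, trace_mul_comm]
    simp only [mul_assoc]
  rw [← htr, hcyc]
  exact norm_trace_mul_le_schattenNorm hp hpt M (hN.unitary_mul_mul h₂ h₁)

theorem schattenNorm_unitary_mul_mul (hp : 1 ≤ p) {W₁ W₂ : Matrix n n ℂ}
    (h₁ : W₁ ∈ unitary (Matrix n n ℂ)) (h₂ : W₂ ∈ unitary (Matrix n n ℂ)) (M : Matrix n n ℂ) :
    schattenNorm p (W₁ * M * W₂) = schattenNorm p M := by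
  refine (schattenNorm_unitary_mul_mul_le hp h₁ h₂ M).antisymm ?_
  simpa [← mul_assoc, Unitary.star_mul_self_of_mem h₁, mul_assoc _ W₂,
    Unitary.mul_star_self_of_mem h₂] using
    schattenNorm_unitary_mul_mul_le hp (Unitary.star_mem h₁) (Unitary.star_mem h₂) (W₁ * M * W₂)

lemma schattenNorm_mul_unitary (hp : 1 ≤ p) (M : Matrix n n ℂ) {W : Matrix n n ℂ}
    (hW : W ∈ unitary (Matrix n n ℂ)) : schattenNorm p (M * W) = schattenNorm p M := by
  simpa using schattenNorm_unitary_mul_mul hp (one_mem _) hW M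

lemma schattenNorm_unitary_mul (hp : 1 ≤ p) {W : Matrix n n ℂ}
    (hW : W ∈ unitary (Matrix n n ℂ)) (M : Matrix n n ℂ) :
    schattenNorm p (W * M) = schattenNorm p M := by
  simpa using schattenNorm_unitary_mul_mul hp hW (one_mem _) M

end SchattenNorm

lemma Fintype.sum_eq_sum_update {ι β M : Type*} [DecidableEq ι] [Fintype β] [DecidableEq β]
    [Fintype (ι → β)] [AddCommMonoid M] (a : ι → β) (i : ι) (f : (ι → β) → M)
    (hf : ∀ c, (∃ j ≠ i, a j ≠ c j) → f c = 0) :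
    ∑ c, f c = ∑ x, f (Function.update a i x) := by
  rw [← Finset.sum_image (s := Finset.univ) (g := Function.update a i)
    (fun x _ y _ h => by simpa using congrFun h i)]
  refine (Finset.sum_subset (Finset.subset_univ _) fun c _ hc => hf c ?_).symm
  by_contra! h
  refine hc (Finset.mem_image.mpr ⟨c i, Finset.mem_univ _, funext fun j => ?_⟩)
  by_cases hj : j = i
  · subst hj; simp
  · simp [Function.update_of_ne hj, h j hj]

lemma Fintype.sum_sum_update {ι β M : Type*} [DecidableEq ι] [Fintype β] [DecidableEq β]
    [Fintype (ι → β)] [AddCommMonoid M] (i : ι) (F : (ι → β) → M) :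
    ∑ x, ∑ c, F (Function.update c i x) = Fintype.card β • ∑ c, F c := by
  have hfiber : ∀ c, ∑ x, F (Function.update c i x) =
      ∑ c', if ∀ j ≠ i, c j = c' j then F c' else 0 := by
    intro c
    rw [Fintype.sum_eq_sum_update c i]
    · simp +contextual [Function.update_of_ne]
    · rintro c' ⟨j, hj, hne⟩
      exact if_neg fun h => hne (h j hj)
  rw [Finset.sum_comm, Finset.sum_congr rfl fun c _ => hfiber c, Finset.sum_comm, Finset.smul_sum]
  refine Finset.sum_congr rfl fun c' _ => ?_
  rw [Fintype.sum_eq_sum_update c' i]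
  · simp +contextual [Function.update_of_ne]
  · rintro c ⟨j, hj, hne⟩
    exact if_neg fun h => hne (h j hj).symm

section SingleSite

variable {Λ : Type} [Fintype Λ] [DecidableEq Λ]

def singleSite (i : Λ) (M : Matrix (Fin 2) (Fin 2) ℂ) : SpinOp Λ :=
  of fun a b => if ∀ j ≠ i, a j = b j then M (a i) (b i) else 0

lemma singleSite_apply_update_self (i : Λ) (M : Matrix (Fin 2) (Fin 2) ℂ) (a : SpinConf Λ)
    (x : Fin 2) :
    singleSite i M a (Function.update a i x) = M (a i) x := by
  simp +contextual [singleSite, Function.update_of_ne]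

lemma singleSite_update_self_apply (i : Λ) (M : Matrix (Fin 2) (Fin 2) ℂ) (b : SpinConf Λ)
    (y : Fin 2) :
    singleSite i M (Function.update b i y) b = M y (b i) := by
  simp +contextual [singleSite, Function.update_of_ne]

lemma singleSite_mul_apply (i : Λ) (M : Matrix (Fin 2) (Fin 2) ℂ) (X : SpinOp Λ)
    (a b : SpinConf Λ) :
    (singleSite i M * X) a b = ∑ x, M (a i) x * X (Function.update a i x) b := by
  rw [mul_apply, Fintype.sum_eq_sum_update a i]
  · simp [singleSite_apply_update_self]
  · rintro c ⟨j, hj, hne⟩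
    simp [singleSite, show ¬∀ k ≠ i, a k = c k from fun h => hne (h j hj)]

lemma mul_singleSite_apply (X : SpinOp Λ) (i : Λ) (M : Matrix (Fin 2) (Fin 2) ℂ)
    (a b : SpinConf Λ) :
    (X * singleSite i M) a b = ∑ y, X a (Function.update b i y) * M y (b i) := by
  rw [mul_apply, Fintype.sum_eq_sum_update b i]
  · simp [singleSite_update_self_apply]
  · rintro c ⟨j, hj, hne⟩
    simp [singleSite, show ¬∀ k ≠ i, c k = b k from fun h => hne (h j hj).symm]

lemma singleSite_update_apply (i : Λ) (M : Matrix (Fin 2) (Fin 2) ℂ) (a b : SpinConf Λ)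
    (x : Fin 2) :
    singleSite i M (Function.update a i x) b = if ∀ j ≠ i, a j = b j then M x (b i) else 0 := by
  simp only [singleSite, of_apply, Function.update_self]
  exact if_congr (forall₂_congr fun j hj => by rw [Function.update_of_ne hj]) rfl rfl

lemma singleSite_mul_singleSite (i : Λ) (M N : Matrix (Fin 2) (Fin 2) ℂ) :
    singleSite i M * singleSite (Λ := Λ) i N = singleSite i (M * N) := by
  ext a b
  simp only [singleSite_mul_apply, singleSite_update_apply, mul_ite, mul_zero]
  split_ifs with hab
  · rw [singleSite, of_apply, if_pos hab, mul_apply]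
  · rw [singleSite, of_apply, if_neg hab, Finset.sum_const_zero]

lemma singleSite_one (i : Λ) : singleSite (Λ := Λ) i 1 = 1 := by
  ext a b
  by_cases hab : a = b
  · subst hab; simp [singleSite]
  · rw [one_apply_ne hab, singleSite, of_apply]
    split_ifs with h
    · exact one_apply_ne fun hi => hab (funext fun j => if hj : j = i then hj ▸ hi else h j hj)
    · rfl

lemma conjTranspose_singleSite (i : Λ) (M : Matrix (Fin 2) (Fin 2) ℂ) :
    (singleSite (Λ := Λ) i M)ᴴ = singleSite i Mᴴ := by
  ext a b
  simp only [conjTranspose_apply, singleSite, of_apply, eq_comm (a := b _)]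
  split_ifs <;> simp

lemma singleSite_mul_singleSite_apply_of_ne {i j : Λ} (hij : i ≠ j)
    (M N : Matrix (Fin 2) (Fin 2) ℂ) (a b : SpinConf Λ) :
    (singleSite i M * singleSite j N) a b =
      if ∀ k, k ≠ i → k ≠ j → a k = b k then M (a i) (b i) * N (a j) (b j) else 0 := by
  rw [singleSite_mul_apply, Finset.sum_eq_single (b i)]
  · simp only [singleSite, of_apply, Function.update_of_ne hij.symm, mul_ite, mul_zero]
    refine if_congr ⟨fun h k hki hkj => ?_, fun h k hkj => ?_⟩ rfl rfl
    · simpa [Function.update_of_ne hki] using h k hkj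
    · by_cases hki : k = i
      · subst hki; simp
      · simp [Function.update_of_ne hki, h k hki hkj]
  · intro x _ hx
    rw [singleSite, of_apply, if_neg, mul_zero]
    exact fun h => hx (by simpa using h i hij)
  · simp

lemma singleSite_commute {i j : Λ} (hij : i ≠ j) (M N : Matrix (Fin 2) (Fin 2) ℂ) :
    Commute (singleSite i M) (singleSite (Λ := Λ) j N) := by
  ext a b
  rw [singleSite_mul_singleSite_apply_of_ne hij, singleSite_mul_singleSite_apply_of_ne hij.symm]
  exact if_congr ⟨fun h k hkj hki => h k hki hkj, fun h k hki hkj => h k hkj hki⟩ (mul_comm _ _) rfl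

end SingleSite

section Pauli

lemma pauli_mul_self (k : Fin 4) : pauli k * pauli k = 1 := by
  fin_cases k <;> ext x y <;> fin_cases x <;> fin_cases y <;>
    simp [pauli, mul_apply, Fin.sum_univ_two]

lemma conjTranspose_pauli (k : Fin 4) : (pauli k)ᴴ = pauli k := by
  fin_cases k <;> ext x y <;> fin_cases x <;> fin_cases y <;> simp [pauli]

lemma sum_pauli_mul_pauli (u x y v : Fin 2) :
    ∑ k, pauli k u x * pauli k y v = if u = v ∧ x = y then 2 else 0 := by
  fin_cases u <;> fin_cases x <;> fin_cases y <;> fin_cases v <;>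
    simp [pauli, Fin.sum_univ_four] <;> norm_num

end Pauli

section PauliTwirl

variable {Λ : Type} [Fintype Λ] [DecidableEq Λ]

def pauliAt (i : Λ) (k : Fin 4) : SpinOp Λ := singleSite i (pauli k)

lemma pauliAt_mul_self (i : Λ) (k : Fin 4) : pauliAt (Λ := Λ) i k * pauliAt i k = 1 := by
  rw [pauliAt, singleSite_mul_singleSite, pauli_mul_self, singleSite_one]

lemma pauliAt_mem_unitary (i : Λ) (k : Fin 4) : pauliAt (Λ := Λ) i k ∈ unitary (SpinOp Λ) := by
  have hstar : star (pauliAt (Λ := Λ) i k) = pauliAt i k := by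
    rw [star_eq_conjTranspose, pauliAt, conjTranspose_singleSite, conjTranspose_pauli]
  exact Unitary.mem_iff.mpr ⟨by rw [hstar, pauliAt_mul_self], by rw [hstar, pauliAt_mul_self]⟩

lemma isUnitaryM_pauliAt (i : Λ) (k : Fin 4) : IsUnitaryM (pauliAt (Λ := Λ) i k) :=
  Unitary.mem_iff.mp (pauliAt_mem_unitary i k)

lemma isSupportedOn_pauliAt (i : Λ) (k : Fin 4) : IsSupportedOn (pauliAt (Λ := Λ) i k) {i} := by
  refine ⟨fun a b ⟨j, hj, hne⟩ => ?_, fun a b a' b' ha hb hab hab' => ?_⟩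
  · rw [Finset.mem_singleton] at hj
    simp [pauliAt, singleSite, show ¬∀ k ≠ i, a k = b k from fun h => hne (h j hj)]
  · have h : ∀ j ≠ i, a j = b j := fun j hj => hab j (by simpa using hj)
    have h' : ∀ j ≠ i, a' j = b' j := fun j hj => hab' j (by simpa using hj)
    simp only [pauliAt, singleSite, of_apply, if_pos h, if_pos h',
      ha i (Finset.mem_singleton_self i), hb i (Finset.mem_singleton_self i)]

def pauliTwirl (i : Λ) (B : SpinOp Λ) : SpinOp Λ := (4 : ℂ)⁻¹ • ∑ k, pauliAt i k * B * pauliAt i k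

lemma pauliTwirl_apply (i : Λ) (B : SpinOp Λ) (a b : SpinConf Λ) :
    pauliTwirl i B a b =
      if a i = b i then 2⁻¹ * ∑ x, B (Function.update a i x) (Function.update b i x) else 0 := by
  have hk : ∀ k, (pauliAt i k * B * pauliAt i k) a b = ∑ y, ∑ x,
      pauli k (a i) x * pauli k y (b i) * B (Function.update a i x) (Function.update b i y) := by
    intro k
    simp only [pauliAt, mul_singleSite_apply, singleSite_mul_apply, Finset.sum_mul]
    exact Finset.sum_congr rfl fun y _ => Finset.sum_congr rfl fun x _ => by ring
  simp only [pauliTwirl, Matrix.smul_apply, Matrix.sum_apply, hk, smul_eq_mul]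
  rw [Finset.sum_comm, Finset.sum_congr rfl fun y _ => Finset.sum_comm]
  simp only [← Finset.sum_mul, sum_pauli_mul_pauli, ite_mul, zero_mul]
  split_ifs with h
  · simp only [h, true_and, Finset.sum_ite_eq', Finset.mem_univ, if_true, Finset.mul_sum]
    refine Finset.sum_congr rfl fun y _ => ?_
    ring
  · simp [h]

end PauliTwirl

section Localize

variable {Λ : Type} [Fintype Λ] [DecidableEq Λ]

lemma localize_apply (A : SpinOp Λ) (X : Finset Λ) (a b : SpinConf Λ) :
    localize A X a b = if ∀ i ∉ X, a i = b i then
      (∑ c, A (X.piecewise a c) (X.piecewise b c)) / 2 ^ Fintype.card Λ else 0 := by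
  rw [localize]
  split_ifs
  · simp only [one_mul]; rfl
  · simp only [zero_mul, zero_div]

lemma localize_univ (A : SpinOp Λ) : localize A Finset.univ = A := by
  ext a b
  simp [localize_apply, Finset.card_univ]

lemma localize_eq_pauliTwirl_localize_insert (A : SpinOp Λ) {X : Finset Λ} {i : Λ} (hi : i ∉ X) :
    localize A X = pauliTwirl i (localize A (insert i X)) := by
  ext a b
  have hpw : ∀ (a c : SpinConf Λ) x, (insert i X).piecewise (Function.update a i x) c =
      X.piecewise a (Function.update c i x) := by
    intro a c x
    funext j
    by_cases hj : j = i
    · subst hj; simp [Finset.piecewise, hi]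
    · simp [Finset.piecewise, hj]
  have hcond : ∀ x, (∀ j ∉ insert i X, Function.update a i x j = Function.update b i x j) ↔
      ∀ j ∉ insert i X, a j = b j := fun x => forall₂_congr fun j hj => by
    have hji : j ≠ i := fun h => hj (h ▸ Finset.mem_insert_self i X)
    rw [Function.update_of_ne hji, Function.update_of_ne hji]
  have hsplit : (∀ j ∉ X, a j = b j) ↔ a i = b i ∧ ∀ j ∉ insert i X, a j = b j := by
    refine ⟨fun h => ⟨h i hi, fun j hj => h j fun hX => hj (Finset.mem_insert_of_mem hX)⟩,
      fun ⟨h₁, h₂⟩ j hj => ?_⟩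
    by_cases hji : j = i
    · exact hji ▸ h₁
    · exact h₂ j (by simp [hji, hj])
  simp only [pauliTwirl_apply, localize_apply, hpw, hcond]
  by_cases h₁ : a i = b i
  swap
  · simp only [if_neg fun h => h₁ (hsplit.mp h).1, if_neg h₁]
  by_cases h₂ : ∀ j ∉ insert i X, a j = b j
  swap
  · simp only [if_neg fun h => h₂ (hsplit.mp h).2, if_pos h₁, if_neg h₂, Finset.sum_const_zero,
      mul_zero]
  simp only [if_pos (hsplit.mpr ⟨h₁, h₂⟩), if_pos h₁, if_pos h₂]
  rw [← Finset.sum_div, Fintype.sum_sum_update i fun c => A (X.piecewise a c) (X.piecewise b c),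
    Fintype.card_fin, nsmul_eq_mul]
  ring

end Localize

section PauliTwirlNorm

variable {Λ : Type} [Fintype Λ] [DecidableEq Λ] {p : ℝ≥0∞}

lemma schattenNorm_pauliTwirl_le (hp : 1 ≤ p) (i : Λ) (B : SpinOp Λ) :
    schattenNorm p (pauliTwirl i B) ≤ schattenNorm p B := by
  rw [pauliTwirl, Finset.smul_sum]
  refine (schattenNorm_sum_smul_le hp _ _ _).trans (le_of_eq ?_)
  simp only [schattenNorm_unitary_mul_mul hp (pauliAt_mem_unitary i _) (pauliAt_mem_unitary i _),
    Finset.sum_const, Finset.card_univ, Fintype.card_fin, nsmul_eq_mul]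
  norm_num
  ring

lemma sub_pauliTwirl (i : Λ) (B : SpinOp Λ) :
    B - pauliTwirl i B = ∑ k, (4 : ℂ)⁻¹ • (commM B (pauliAt i k) * pauliAt i k) := by
  have hk : ∀ k, commM B (pauliAt i k) * pauliAt i k = B - pauliAt i k * B * pauliAt i k := by
    intro k
    rw [commM, sub_mul, mul_assoc, pauliAt_mul_self, mul_one]
  rw [pauliTwirl, ← Finset.smul_sum]
  simp only [hk, Finset.sum_sub_distrib, smul_sub, Finset.sum_const, Finset.card_univ,
    Fintype.card_fin]
  rw [← Nat.cast_smul_eq_nsmul ℂ, smul_smul]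
  norm_num

lemma pauliTwirl_commM_of_commute {i : Λ} {C : SpinOp Λ} (hC : ∀ k, Commute (pauliAt i k) C)
    (B : SpinOp Λ) : pauliTwirl i (commM B C) = commM (pauliTwirl i B) C := by
  simp only [pauliTwirl, commM, Matrix.smul_mul, Matrix.mul_smul, ← smul_sub, Finset.sum_mul,
    Finset.mul_sum, ← Finset.sum_sub_distrib]
  congr 1
  refine Finset.sum_congr rfl fun k _ => ?_
  have h := (hC k).eq
  rw [mul_sub, sub_mul]
  congr 1
  · calc pauliAt i k * (B * C) * pauliAt i k = pauliAt i k * B * (C * pauliAt i k) := by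
          simp only [mul_assoc]
      _ = pauliAt i k * B * pauliAt i k * C := by rw [← h]; simp only [mul_assoc]
  · calc pauliAt i k * (C * B) * pauliAt i k = pauliAt i k * C * B * pauliAt i k := by
          simp only [mul_assoc]
      _ = C * (pauliAt i k * B * pauliAt i k) := by rw [h]; simp only [mul_assoc]

end PauliTwirlNorm

section LocalizeNorm

variable {Λ : Type} [Fintype Λ] [DecidableEq Λ] {p : ℝ≥0∞}

lemma localize_compl_insert (A : SpinOp Λ) {S : Finset Λ} {i : Λ} (hi : i ∉ S) :
    localize A (insert i S)ᶜ = pauliTwirl i (localize A Sᶜ) := by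
  rw [localize_eq_pauliTwirl_localize_insert A
    (fun h => Finset.mem_compl.mp h (Finset.mem_insert_self i S)), Finset.insert_compl_insert hi]

lemma commM_localize_compl_pauliAt (A : SpinOp Λ) {S : Finset Λ} {i : Λ} (hi : i ∉ S) (k : Fin 4) :
    commM (localize A Sᶜ) (pauliAt i k) = localize (commM A (pauliAt i k)) Sᶜ := by
  induction S using Finset.induction_on with
  | empty => simp only [Finset.compl_empty, localize_univ]
  | insert j S hj ih =>
    have hij : j ≠ i := fun h => hi (h ▸ Finset.mem_insert_self j S)
    rw [localize_compl_insert A hj, localize_compl_insert _ hj,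
      ← pauliTwirl_commM_of_commute (C := pauliAt i k) (fun l => singleSite_commute hij _ _),
      ih fun h => hi (Finset.mem_insert_of_mem h)]

lemma schattenNorm_localize_compl_le (hp : 1 ≤ p) (A : SpinOp Λ) (S : Finset Λ) :
    schattenNorm p (localize A Sᶜ) ≤ schattenNorm p A := by
  induction S using Finset.induction_on with
  | empty => rw [Finset.compl_empty, localize_univ]
  | insert j S hj ih =>
    rw [localize_compl_insert A hj]
    exact (schattenNorm_pauliTwirl_le hp j _).trans ih

end LocalizeNorm

section SiteCommutator

variable {Λ : Type} [Fintype Λ] [DecidableEq Λ] {p : ℝ≥0∞}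

def siteCommutatorSup (p : ℝ≥0∞) (A : SpinOp Λ) (i : Λ) : ℝ :=
  ⨆ U : {U : SpinOp Λ // IsUnitaryM U ∧ IsSupportedOn U {i}}, schattenNorm p (commM A U)

lemma schattenNorm_commM_le_siteCommutatorSup (hp : 1 ≤ p) (A : SpinOp Λ) {i : Λ}
    {U : SpinOp Λ} (hU : IsUnitaryM U) (hUi : IsSupportedOn U {i}) :
    schattenNorm p (commM A U) ≤ siteCommutatorSup p A i := by
  refine le_ciSup (f := fun U : {U : SpinOp Λ // IsUnitaryM U ∧ IsSupportedOn U {i}} =>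
    schattenNorm p (commM A U)) ⟨2 * schattenNorm p A, ?_⟩ ⟨U, hU, hUi⟩
  rintro _ ⟨⟨V, hV, -⟩, rfl⟩
  show schattenNorm p (A * V - V * A) ≤ 2 * schattenNorm p A
  have h := schattenNorm_sub_le hp (A * V) (V * A)
  rw [schattenNorm_mul_unitary hp A hV.mem_unitary, schattenNorm_unitary_mul hp hV.mem_unitary] at h
  linarith [h]

lemma schattenNorm_localize_compl_sub_pauliTwirl_le (hp : 1 ≤ p) (A : SpinOp Λ) {S : Finset Λ}
    {i : Λ} (hi : i ∉ S) :
    schattenNorm p (localize A Sᶜ - pauliTwirl i (localize A Sᶜ)) ≤ siteCommutatorSup p A i := by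
  rw [sub_pauliTwirl]
  refine (schattenNorm_sum_smul_le hp _ _ _).trans ?_
  have hk : ∀ k, schattenNorm p (commM (localize A Sᶜ) (pauliAt i k) * pauliAt i k) ≤
      siteCommutatorSup p A i := by
    intro k
    rw [schattenNorm_mul_unitary hp _ (pauliAt_mem_unitary i k),
      commM_localize_compl_pauliAt A hi k]
    exact (schattenNorm_localize_compl_le hp _ S).trans <|
      schattenNorm_commM_le_siteCommutatorSup hp A (isUnitaryM_pauliAt i k)
        (isSupportedOn_pauliAt i k)
  calc ∑ k, ‖(4 : ℂ)⁻¹‖ * schattenNorm p (commM (localize A Sᶜ) (pauliAt i k) * pauliAt i k)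
      ≤ ∑ _k : Fin 4, ‖(4 : ℂ)⁻¹‖ * siteCommutatorSup p A i :=
        Finset.sum_le_sum fun k _ => mul_le_mul_of_nonneg_left (hk k) (norm_nonneg _)
    _ = siteCommutatorSup p A i := by
        norm_num
        ring

theorem schattenNorm_sub_localize_compl_le (hp : 1 ≤ p) (A : SpinOp Λ) (S : Finset Λ) :
    schattenNorm p (A - localize A Sᶜ) ≤ ∑ i ∈ S, siteCommutatorSup p A i := by
  induction S using Finset.induction_on with
  | empty => simpa [localize_univ] using schattenNorm_zero_le (n := SpinConf Λ) hp
  | insert i S hi ih =>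
    rw [Finset.sum_insert hi, localize_compl_insert A hi,
      ← sub_add_sub_cancel A (localize A Sᶜ), add_comm]
    exact (schattenNorm_add_le hp _ _).trans
      (add_le_add (schattenNorm_localize_compl_sub_pauliTwirl_le hp A hi) ih)

end SiteCommutator

end

/-- **Site-by-site bound on the partial-trace localization error:**
for every Schatten `p`-norm,
`‖A - (tr_{X̃^c}[A]/tr_{X̃^c} 1̂) ⊗ 1_{X̃^c}‖_p ≤ Σ_{i∈X̃^c} sup_{U_i} ‖[A,U_i]‖_p`,
the supremum running over unitaries supported on the single site `{i}`. -/
theorem localization_error_site_by_site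
    {Λ : Type} [Fintype Λ] [DecidableEq Λ]
    (A : SpinOp Λ) (Xt : Finset Λ) (p : ℝ≥0∞) (hp : 1 ≤ p) :
    schattenNorm p (A - localize A Xt)
      ≤ ∑ i ∈ Xtᶜ,
          ⨆ U : {U : SpinOp Λ // IsUnitaryM U ∧ IsSupportedOn U {i}},
            schattenNorm p (commM A (U : SpinOp Λ)) := by
  have h := schattenNorm_sub_localize_compl_le hp A Xtᶜ
  rwa [compl_compl] at h
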